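/- Let r_i, r_j be points on a circle of radius a centered at c in a horizontal plane with s = dist(r_i, r_j) > δ > 0, and let p = r_i + (δ/s)(T − r_i) where T is the upward apex of the equilateral triangle on [r_i, r_j]. Then the horizontal distance from p to c is at most √(a² − δ(2s − δ)/4) < a, i.e., the decrease a − dist_horiz(p, c) is bounded below by a positive quantity depending only on a, s, δ. -/

import Mathlib

noncomputable section

abbrev E3 := EuclideanSpace ℝ (Fin 3)

/-- Unit vector in the positive `z` direction. -/
def ez : E3 := EuclideanSpace.single 2 1

/-- Distance between the horizontal (xy) projections of two points. -/
def distHoriz (p q : E3) : ℝ := Real.sqrt ((p 0 - q 0)^2 + (p 1 - q 1)^2)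

/-- `x` lies on the lateral surface of the right circular cone with vertex `V`,
axis parallel to the z-axis and semi-vertical angle `45°`. -/
def onCone (V x : E3) : Prop := distHoriz x V = V 2 - x 2

/-!
The vertical offset of the apex `T` disappears under horizontal projection, so moving the fraction
`δ / s` from `rᵢ` towards `T` projects to moving the fraction `μ = δ / (2s)` along the chord
`[rᵢ, rⱼ]` of the circle. Along a chord of length `s` of a circle of radius `a`, the squared
distance to the centre is `a² − μ (1 − μ) s²`, which here equals `a² − δ (2s − δ) / 4`;
the bound is in fact attained.
-/

theorem dist_lineMap_sq {V : Type*} [NormedAddCommGroup V] [InnerProductSpace ℝ V]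
    (x y c : V) (t : ℝ) :
    dist (AffineMap.lineMap x y t) c ^ 2 =
      (1 - t) * dist x c ^ 2 + t * dist y c ^ 2 - t * (1 - t) * dist x y ^ 2 := by
  have hsplit : AffineMap.lineMap x y t - c = (1 - t) • (x - c) + t • (y - c) := by
    rw [AffineMap.lineMap_apply_module]; module
  have hxy : x - y = (x - c) - (y - c) := by abel
  rw [dist_eq_norm, dist_eq_norm, dist_eq_norm, dist_eq_norm, hsplit, hxy]
  generalize x - c = u
  generalize y - c = v
  rw [norm_add_sq_real, norm_sub_sq_real, norm_smul, norm_smul, inner_smul_left, inner_smul_right]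
  simp only [Real.norm_eq_abs, mul_pow, sq_abs, conj_trivial]
  ring

def horizProj (x : E3) : E3 := x - x 2 • ez

theorem dist_horizProj (p q : E3) : dist (horizProj p) (horizProj q) = distHoriz p q := by
  simp [EuclideanSpace.dist_eq, distHoriz, Fin.sum_univ_three, horizProj, ez, Real.dist_eq, sq_abs]

theorem dist_horizProj_of_height_eq {p q : E3} (h : p 2 = q 2) :
    dist (horizProj p) (horizProj q) = dist p q := by
  rw [dist_eq_norm, dist_eq_norm, horizProj, horizProj, h, sub_sub_sub_cancel_right]

theorem horizProj_add_smul_sub_apex (x y : E3) (t h : ℝ) :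
    horizProj (x + t • (midpoint ℝ x y + h • ez - x)) =
      AffineMap.lineMap (horizProj x) (horizProj y) (t / 2) := by
  ext i
  fin_cases i <;>
    simp [horizProj, ez, midpoint_eq_smul_add, AffineMap.lineMap_apply_module] <;> ring

theorem stmt9_general (c ri rj T p : E3) (a s δ : ℝ)
    (hzi : ri 2 = c 2) (hzj : rj 2 = c 2)
    (hri : dist ri c = a) (hrj : dist rj c = a)
    (hs : s = dist ri rj) (hδ0 : 0 < δ) (hδs : δ < s)
    (hT : T = midpoint ℝ ri rj + (s * Real.sqrt 3 / 2) • ez)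
    (hp : p = ri + (δ / s) • (T - ri)) :
    distHoriz p c ≤ Real.sqrt (a ^ 2 - δ * (2 * s - δ) / 4) ∧
      Real.sqrt (a ^ 2 - δ * (2 * s - δ) / 4) < a := by
  have hs0 : 0 < s := hδ0.trans hδs
  have ha : 0 ≤ a := hri ▸ dist_nonneg
  have hsq : distHoriz p c ^ 2 = a ^ 2 - δ * (2 * s - δ) / 4 := by
    rw [← dist_horizProj, hp, hT, horizProj_add_smul_sub_apex, dist_lineMap_sq,
      dist_horizProj_of_height_eq hzi, dist_horizProj_of_height_eq hzj,
      dist_horizProj_of_height_eq (hzi.trans hzj.symm), hri, hrj, ← hs]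
    field_simp
    ring
  have hshrink : 0 < δ * (2 * s - δ) / 4 := by nlinarith
  refine ⟨?_, ?_⟩
  · exact Real.le_sqrt_of_sq_le hsq.le
  · calc Real.sqrt (a ^ 2 - δ * (2 * s - δ) / 4)
        < Real.sqrt (a ^ 2) := Real.sqrt_lt_sqrt (hsq ▸ sq_nonneg _) (by linarith)
      _ = a := Real.sqrt_sq ha

/-- Quantified shrinking of the enclosing radius: after moving distance `δ` with
`0 < δ < s` along the triangle side, the horizontal distance from the centre is at
most `√(a² − δ(2s − δ)/4)`, which is strictly less than `a`. -/
theorem stmt9 (c ri rj T p : E3) (a s δ : ℝ) (ha : 0 < a)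
    (hzi : ri 2 = c 2) (hzj : rj 2 = c 2)
    (hri : dist ri c = a) (hrj : dist rj c = a)
    (hs : s = dist ri rj) (hδ0 : 0 < δ) (hδs : δ < s)
    (hT : T = midpoint ℝ ri rj + (s * Real.sqrt 3 / 2) • ez)
    (hp : p = ri + (δ / s) • (T - ri)) :
    distHoriz p c ≤ Real.sqrt (a ^ 2 - δ * (2 * s - δ) / 4) ∧
      Real.sqrt (a ^ 2 - δ * (2 * s - δ) / 4) < a :=
  stmt9_general c ri rj T p a s δ hzi hzj hri hrj hs hδ0 hδs hT hp
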